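/- arXiv:0706.0908 — 2 statements merged into one kernel-verified Lean document; each statement's English description precedes it below -/
import Mathlib

section
/- Let $\phi\in\mathbb{B}^+$ and $\rho>0$ be such that $([0,1],\tau_i,\phi)$ is a $\rho$-weighted system. Then $p(\phi)=\ln\rho$. -/
/-!
For the eigenfunction `h`, the test function `f = φ h` has `logRatio τ f = log ρ - log φ`, so
`entropy ν̂ + ∫ log φ dν̂ ≤ log ρ` for every holonomic `ν̂`; the infimum defining the entropy is a
genuine one because holonomy makes `∫ logRatio τ f dν̂ ≥ ∫ (log f ∘ τ_{w₀} - log f) dν̂ = 0`.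

Equality is attained by the measure whose `x`-marginal is `(h / ∫ h dν) ν` and whose first symbol is
`i` with probability `pᵢ(x) = φ(τᵢ x) h(τᵢ x) / (ρ h x)`. It is holonomic because the eigenmeasure
identity `∫ P_φ g dν = ρ ∫ g dν` extends from continuous to bounded Borel `g` (two finite measures
agreeing on continuous functions coincide). Gibbs' inequality `log ∑ aᵢ ≥ ∑ pᵢ log (aᵢ / pᵢ)`, with
`aᵢ = f(τᵢ x)`, then bounds every `∫ logRatio τ f` below by the value `log ρ - ∫ log φ` attained
at `f = φ h`.
-/

open MeasureTheory

noncomputable section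

/-- `f ∈ 𝔹⁺` : Borel measurable and bounded away from `0` and `∞`. -/
def MemBplus (f : unitInterval → ℝ) : Prop :=
  Measurable f ∧ ∃ c C : ℝ, 0 < c ∧ (∀ x, c ≤ f x) ∧ (∀ x, f x ≤ C)

/-- A probability on `[0,1] × Σ` is holonomic. -/
def IsHolonomic {d : ℕ} (τ : Fin d → unitInterval → unitInterval)
    (ν : Measure (unitInterval × (ℕ → Fin d))) : Prop :=
  ∀ f : C(unitInterval, ℝ), (∫ p, f (τ (p.2 0) p.1) ∂ν) = ∫ p, f p.1 ∂ν

/-- The transfer (Ruelle) operator `P_φ f (x) = ∑ i, φ(τ_i x) f(τ_i x)`. -/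
def transferOp {d : ℕ} (τ : Fin d → unitInterval → unitInterval)
    (φ : unitInterval → ℝ) (f : unitInterval → ℝ) : unitInterval → ℝ :=
  fun x => ∑ i : Fin d, φ (τ i x) * f (τ i x)

/-- The entropy of a holonomic probability. -/
def entropy {d : ℕ} (τ : Fin d → unitInterval → unitInterval)
    (nuhat : Measure (unitInterval × (ℕ → Fin d))) : ℝ :=
  sInf {r : ℝ | ∃ f : unitInterval → ℝ, MemBplus f ∧
    r = ∫ p, Real.log ((∑ i : Fin d, f (τ i p.1)) / f p.1) ∂nuhat}

/-- The topological pressure `p(φ) = sup {h(ν̂) + ∫ ln φ dν̂ : ν̂ holonomic}`. -/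
def pressure {d : ℕ} (τ : Fin d → unitInterval → unitInterval)
    (φ : unitInterval → ℝ) : ℝ :=
  sSup {r : ℝ | ∃ nuhat : Measure (unitInterval × (ℕ → Fin d)),
    IsProbabilityMeasure nuhat ∧ IsHolonomic τ nuhat ∧
    r = entropy τ nuhat + ∫ p, Real.log (φ p.1) ∂nuhat}

/-- `([0,1], τ_i, φ)` is a `ρ`-weighted system. -/
def IsRhoWeighted {d : ℕ} (τ : Fin d → unitInterval → unitInterval)
    (φ : unitInterval → ℝ) (ρ : ℝ) : Prop :=
  ∃ h : unitInterval → ℝ, MemBplus h ∧ (∀ x, transferOp τ φ h x = ρ * h x) ∧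
    ∃ ν : Measure unitInterval, IsProbabilityMeasure ν ∧
      ∀ f : C(unitInterval, ℝ),
        (∫ x, transferOp τ φ f x ∂ν) = ρ * ∫ x, f x ∂ν

open scoped unitInterval

def BddMeasurable {α : Type*} [MeasurableSpace α] (g : α → ℝ) : Prop :=
  Measurable g ∧ ∃ C, ∀ x, |g x| ≤ C

namespace BddMeasurable

variable {α β : Type*} [MeasurableSpace α] [MeasurableSpace β] {f g : α → ℝ}

theorem integrable (hg : BddMeasurable g) (μ : Measure α) [IsFiniteMeasure μ] :
    Integrable g μ :=
  .of_bound hg.1.aestronglyMeasurable hg.2.choose (ae_of_all _ hg.2.choose_spec)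

theorem isFiniteMeasure_withDensity_ofReal (hg : BddMeasurable g) (μ : Measure α)
    [IsFiniteMeasure μ] : IsFiniteMeasure (μ.withDensity fun x => ENNReal.ofReal (g x)) :=
  MeasureTheory.isFiniteMeasure_withDensity_ofReal (hg.integrable μ).2

theorem const (a : ℝ) : BddMeasurable fun _ : α => a :=
  ⟨measurable_const, |a|, fun _ => le_rfl⟩

theorem comp (hg : BddMeasurable g) {k : β → α} (hk : Measurable k) :
    BddMeasurable fun y => g (k y) :=
  ⟨hg.1.comp hk, hg.2.choose, fun _ => hg.2.choose_spec _⟩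

theorem sub (hf : BddMeasurable f) (hg : BddMeasurable g) : BddMeasurable fun x => f x - g x := by
  obtain ⟨hfm, Cf, hCf⟩ := hf
  obtain ⟨hgm, Cg, hCg⟩ := hg
  exact ⟨hfm.sub hgm, Cf + Cg, fun x => (abs_sub _ _).trans (add_le_add (hCf x) (hCg x))⟩

theorem mul (hf : BddMeasurable f) (hg : BddMeasurable g) : BddMeasurable fun x => f x * g x := by
  obtain ⟨hfm, Cf, hCf⟩ := hf
  obtain ⟨hgm, Cg, hCg⟩ := hg
  refine ⟨hfm.mul hgm, Cf * Cg, fun x => ?_⟩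
  rw [abs_mul]
  exact mul_le_mul (hCf x) (hCg x) (abs_nonneg _) ((abs_nonneg _).trans (hCf x))

theorem div_const (hg : BddMeasurable g) (a : ℝ) : BddMeasurable fun x => g x / a := by
  obtain ⟨hgm, C, hC⟩ := hg
  refine ⟨hgm.div_const a, C / |a|, fun x => ?_⟩
  rw [abs_div]
  exact div_le_div_of_nonneg_right (hC x) (abs_nonneg a)

theorem finset_sum {ι : Type*} (s : Finset ι) {g : ι → α → ℝ} (hg : ∀ i, BddMeasurable (g i)) :
    BddMeasurable fun x => ∑ i ∈ s, g i x := by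
  choose hgm C hC using hg
  exact ⟨Finset.measurable_sum s fun i _ => hgm i, ∑ i ∈ s, C i,
    fun x => (Finset.abs_sum_le_sum_abs _ _).trans (Finset.sum_le_sum fun i _ => hC i x)⟩

end BddMeasurable

section SumMapWithDensity

variable {ι α β : Type*} [Fintype ι] [MeasurableSpace α] [MeasurableSpace β]

def sumMapWithDensity (μ : Measure α) (w : ι → α → ℝ) (k : ι → α → β) : Measure β :=
  ∑ i, (μ.withDensity fun x => ENNReal.ofReal (w i x)).map (k i)

variable {μ : Measure α} [IsFiniteMeasure μ] {w : ι → α → ℝ} {k : ι → α → β}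

theorem isFiniteMeasure_sumMapWithDensity (hw : ∀ i, BddMeasurable (w i)) :
    IsFiniteMeasure (sumMapWithDensity μ w k) := by
  have := fun i => (hw i).isFiniteMeasure_withDensity_ofReal μ
  unfold sumMapWithDensity
  infer_instance

theorem integral_sumMapWithDensity (hw : ∀ i, BddMeasurable (w i)) (hw0 : ∀ i x, 0 ≤ w i x)
    (hk : ∀ i, Measurable (k i)) {g : β → ℝ} (hg : BddMeasurable g) :
    ∫ y, g y ∂(sumMapWithDensity μ w k) = ∑ i, ∫ x, w i x * g (k i x) ∂μ := by
  have := fun i => (hw i).isFiniteMeasure_withDensity_ofReal μ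
  rw [sumMapWithDensity, integral_finsetSum_measure fun i _ => hg.integrable _]
  refine Finset.sum_congr rfl fun i _ => ?_
  rw [integral_map (hk i).aemeasurable hg.1.aestronglyMeasurable,
    integral_withDensity_eq_integral_toReal_smul (hw i).1.ennreal_ofReal
      (ae_of_all _ fun _ => ENNReal.ofReal_lt_top)]
  simp only [ENNReal.toReal_ofReal (hw0 i _), smul_eq_mul]

end SumMapWithDensity

theorem sum_mul_log_div_le_log_sum {ι : Type*} (s : Finset ι) {p a : ι → ℝ}
    (hp : ∀ i ∈ s, 0 < p i) (ha : ∀ i ∈ s, 0 < a i) (hs : ∑ i ∈ s, p i = 1) :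
    ∑ i ∈ s, p i * Real.log (a i / p i) ≤ Real.log (∑ i ∈ s, a i) := by
  have := strictConcaveOn_log_Ioi.concaveOn.le_map_sum (fun i hi => (hp i hi).le) hs
    (fun i hi => div_pos (ha i hi) (hp i hi))
  simp only [smul_eq_mul] at this
  rwa [Finset.sum_congr rfl fun i hi => mul_div_cancel₀ (a i) (hp i hi).ne'] at this

theorem ContinuousMap.bddMeasurable {X : Type*} [TopologicalSpace X] [CompactSpace X]
    [MeasurableSpace X] [OpensMeasurableSpace X] (f : C(X, ℝ)) : BddMeasurable f :=
  ⟨f.continuous.measurable, ‖f‖, f.norm_coe_le_norm⟩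

theorem BddMeasurable.transferOp {d : ℕ} {τ : Fin d → I → I} (hτ : ∀ i, Measurable (τ i))
    {φ g : I → ℝ} (hφ : BddMeasurable φ) (hg : BddMeasurable g) :
    BddMeasurable (transferOp τ φ g) :=
  BddMeasurable.finset_sum _ fun i => (hφ.comp (hτ i)).mul (hg.comp (hτ i))

namespace MemBplus

variable {f g : I → ℝ}

theorem pos (hf : MemBplus f) (x : I) : 0 < f x :=
  let ⟨_, _, _, hc, hcf, _⟩ := hf
  hc.trans_le (hcf x)

theorem const {a : ℝ} (ha : 0 < a) : MemBplus fun _ => a :=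
  ⟨measurable_const, a, a, ha, fun _ => le_rfl, fun _ => le_rfl⟩

theorem bddMeasurable (hf : MemBplus f) : BddMeasurable f := by
  obtain ⟨hfm, c, C, -, -, hfC⟩ := id hf
  exact ⟨hfm, C, fun x => by rw [abs_of_pos (hf.pos x)]; exact hfC x⟩

theorem log (hf : MemBplus f) : BddMeasurable fun x => Real.log (f x) := by
  obtain ⟨hfm, c, C, hc, hcf, hfC⟩ := id hf
  exact ⟨hfm.log, max |Real.log c| |Real.log C|, fun x => abs_le_max_abs_abs
    (Real.log_le_log hc (hcf x)) (Real.log_le_log (hf.pos x) (hfC x))⟩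

theorem mul (hf : MemBplus f) (hg : MemBplus g) : MemBplus fun x => f x * g x := by
  obtain ⟨hfm, cf, Cf, hcf, hfl, hfu⟩ := id hf
  obtain ⟨hgm, cg, Cg, hcg, hgl, hgu⟩ := id hg
  exact ⟨hfm.mul hgm, cf * cg, Cf * Cg, mul_pos hcf hcg,
    fun x => mul_le_mul (hfl x) (hgl x) hcg.le (hf.pos x).le,
    fun x => mul_le_mul (hfu x) (hgu x) (hg.pos x).le ((hf.pos x).le.trans (hfu x))⟩

theorem div (hf : MemBplus f) (hg : MemBplus g) : MemBplus fun x => f x / g x := by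
  obtain ⟨hfm, cf, Cf, hcf, hfl, hfu⟩ := id hf
  obtain ⟨hgm, cg, Cg, hcg, hgl, hgu⟩ := id hg
  exact ⟨hfm.div hgm, cf / Cg, Cf / cg, div_pos hcf (hcg.trans_le ((hgl 0).trans (hgu 0))),
    fun x => div_le_div₀ (hf.pos x).le (hfl x) (hg.pos x) (hgu x),
    fun x => div_le_div₀ ((hf.pos x).le.trans (hfu x)) (hfu x) hcg (hgl x)⟩

theorem sum_comp {d : ℕ} [NeZero d] {τ : Fin d → I → I} (hτ : ∀ i, Measurable (τ i))
    (hf : MemBplus f) : MemBplus fun x => ∑ i, f (τ i x) := by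
  obtain ⟨hfm, c, C, hc, hfl, hfu⟩ := id hf
  refine ⟨Finset.measurable_sum _ fun i _ => hfm.comp (hτ i), c, d * C, hc, fun x => ?_,
    fun x => ?_⟩
  · exact (hfl (τ 0 x)).trans (Finset.single_le_sum (f := fun i => f (τ i x))
      (fun i _ => (hf.pos (τ i x)).le) (Finset.mem_univ 0))
  · simpa using Finset.sum_le_sum fun i (_ : i ∈ Finset.univ) => hfu (τ i x)

end MemBplus

theorem BddMeasurable.div_memBplus {g f : I → ℝ} (hg : BddMeasurable g) (hf : MemBplus f) :
    BddMeasurable fun x => g x / f x := by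
  obtain ⟨hgm, C, hC⟩ := hg
  obtain ⟨hfm, c, -, hc, hcf, -⟩ := id hf
  refine ⟨hgm.div hfm, C / c, fun x => ?_⟩
  rw [abs_div, abs_of_pos (hf.pos x)]
  exact div_le_div₀ ((abs_nonneg _).trans (hC x)) (hC x) hc (hcf x)

section

variable {d : ℕ} {τ : Fin d → I → I}

def logRatio (τ : Fin d → I → I) (f : I → ℝ) (x : I) : ℝ :=
  Real.log ((∑ i, f (τ i x)) / f x)

theorem MemBplus.bddMeasurable_logRatio [NeZero d] (hτ : ∀ i, Measurable (τ i)) {f : I → ℝ}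
    (hf : MemBplus f) : BddMeasurable (logRatio τ f) :=
  ((hf.sum_comp hτ).div hf).log

theorem log_sub_log_le_logRatio {f : I → ℝ} (hf : ∀ x, 0 < f x) (i : Fin d) (x : I) :
    Real.log (f (τ i x)) - Real.log (f x) ≤ logRatio τ f x := by
  have hle : f (τ i x) ≤ ∑ j, f (τ j x) :=
    Finset.single_le_sum (f := fun j => f (τ j x)) (fun j _ => (hf _).le) (Finset.mem_univ i)
  rw [logRatio, Real.log_div ((hf _).trans_le hle).ne' (hf x).ne']
  exact sub_le_sub_right (Real.log_le_log (hf _) hle) _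

theorem measurable_apply_head {α : Type*} [MeasurableSpace α] {T : Fin d → α → α}
    (hT : ∀ i, Measurable (T i)) : Measurable fun p : α × (ℕ → Fin d) => T (p.2 0) p.1 :=
  (measurable_from_prod_countable_left (f := fun q : α × Fin d => T q.2 q.1) hT).comp
    (measurable_fst.prodMk ((measurable_pi_apply 0).comp measurable_snd))

namespace IsHolonomic

variable {m : Measure (I × (ℕ → Fin d))} [IsFiniteMeasure m]

theorem map_apply_head_eq (hτ : ∀ i, Measurable (τ i)) (hm : IsHolonomic τ m) :
    m.map (fun p => τ (p.2 0) p.1) = m.map Prod.fst := by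
  have hπ := measurable_apply_head hτ
  refine ext_of_forall_integral_eq_of_IsFiniteMeasure fun f => ?_
  rw [integral_map hπ.aemeasurable f.continuous.aestronglyMeasurable,
    integral_map measurable_fst.aemeasurable f.continuous.aestronglyMeasurable]
  exact hm f.toContinuousMap

theorem integral_comp_apply_head (hτ : ∀ i, Measurable (τ i)) (hm : IsHolonomic τ m)
    {g : I → ℝ} (hg : Measurable g) : ∫ p, g (τ (p.2 0) p.1) ∂m = ∫ p, g p.1 ∂m := by
  rw [← integral_map (measurable_apply_head hτ).aemeasurable hg.aestronglyMeasurable,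
    hm.map_apply_head_eq hτ, integral_map measurable_fst.aemeasurable hg.aestronglyMeasurable]

theorem integral_logRatio_nonneg [NeZero d] (hτ : ∀ i, Measurable (τ i)) (hm : IsHolonomic τ m)
    {f : I → ℝ} (hf : MemBplus f) : 0 ≤ ∫ p, logRatio τ f p.1 ∂m := by
  have hlog := hf.log
  calc 0 = ∫ p, (Real.log (f (τ (p.2 0) p.1)) - Real.log (f p.1)) ∂m := by
        rw [integral_sub ((hlog.comp (measurable_apply_head hτ)).integrable m)
          ((hlog.comp measurable_fst).integrable m),
          hm.integral_comp_apply_head hτ hlog.1, sub_self]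
    _ ≤ ∫ p, logRatio τ f p.1 ∂m :=
        integral_mono (((hlog.comp (measurable_apply_head hτ)).sub
          (hlog.comp measurable_fst)).integrable m)
          (((hf.bddMeasurable_logRatio hτ).comp measurable_fst).integrable m)
          fun p => log_sub_log_le_logRatio hf.pos (p.2 0) p.1

theorem entropy_le [NeZero d] (hτ : ∀ i, Measurable (τ i)) (hm : IsHolonomic τ m)
    {f : I → ℝ} (hf : MemBplus f) : entropy τ m ≤ ∫ p, logRatio τ f p.1 ∂m :=
  csInf_le ⟨0, by rintro _ ⟨g, hg, rfl⟩; exact hm.integral_logRatio_nonneg hτ hg⟩ ⟨f, hf, rfl⟩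

end IsHolonomic

theorem integral_transferOp_of_bddMeasurable (hτ : ∀ i, Measurable (τ i)) {φ : I → ℝ}
    (hφ : BddMeasurable φ) (hφ0 : ∀ x, 0 ≤ φ x) {ρ : ℝ} (hρ : 0 ≤ ρ) {ν : Measure I}
    [IsFiniteMeasure ν] (hν : ∀ f : C(I, ℝ), ∫ x, transferOp τ φ f x ∂ν = ρ * ∫ x, f x ∂ν)
    {g : I → ℝ} (hg : BddMeasurable g) :
    ∫ x, transferOp τ φ g x ∂ν = ρ * ∫ x, g x ∂ν := by
  have hw i : BddMeasurable fun x => φ (τ i x) := hφ.comp (hτ i)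
  -- `g ↦ ∫ P_φ g dν` is integration against a finite measure, which agrees with `ρ ν` on
  -- continuous functions and is therefore equal to it.
  have hM {g : I → ℝ} (hg : BddMeasurable g) :
      ∫ x, g x ∂(sumMapWithDensity ν (fun i x => φ (τ i x)) τ) = ∫ x, transferOp τ φ g x ∂ν := by
    unfold transferOp
    rw [integral_sumMapWithDensity hw (fun i x => hφ0 _) hτ hg,
      integral_finsetSum _ fun i _ => ((hw i).mul (hg.comp (hτ i))).integrable ν]
  have := isFiniteMeasure_sumMapWithDensity (μ := ν) (k := τ) hw
  have := ν.smul_finite (ENNReal.ofReal_ne_top (r := ρ))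
  have hMν : sumMapWithDensity ν (fun i x => φ (τ i x)) τ = ENNReal.ofReal ρ • ν := by
    refine ext_of_forall_integral_eq_of_IsFiniteMeasure fun f => ?_
    rw [hM (g := f) f.toContinuousMap.bddMeasurable, integral_smul_measure,
      ENNReal.toReal_ofReal hρ]
    exact hν f.toContinuousMap
  rw [← hM hg, hMν, integral_smul_measure, ENNReal.toReal_ofReal hρ, smul_eq_mul]

section WeightedSystem

variable {φ h : I → ℝ} {ρ : ℝ} {ν : Measure I}

theorem MemBplus.integral_pos (hh : MemBplus h) (ν : Measure I) [IsProbabilityMeasure ν] :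
    0 < ∫ x, h x ∂ν := by
  obtain ⟨-, c, -, hc, hch, -⟩ := id hh
  calc 0 < c := hc
    _ = ∫ _, c ∂ν := by simp
    _ ≤ ∫ x, h x ∂ν := integral_mono (integrable_const c) (hh.bddMeasurable.integrable ν) hch

theorem logRatio_mul_eigenfunction (hρ : 0 < ρ) (hφ : MemBplus φ) (hh : MemBplus h)
    (heig : ∀ x, transferOp τ φ h x = ρ * h x) (x : I) :
    logRatio τ (fun y => φ y * h y) x = Real.log ρ - Real.log (φ x) := by
  change Real.log (transferOp τ φ h x / (φ x * h x)) = _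
  rw [heig, mul_div_mul_right _ _ (hh.pos x).ne', Real.log_div hρ.ne' (hφ.pos x).ne']

theorem integral_logRatio_mul_eigenfunction (hρ : 0 < ρ) (hφ : MemBplus φ) (hh : MemBplus h)
    (heig : ∀ x, transferOp τ φ h x = ρ * h x) (m : Measure (I × (ℕ → Fin d)))
    [IsProbabilityMeasure m] :
    ∫ p, logRatio τ (fun y => φ y * h y) p.1 ∂m = Real.log ρ - ∫ p, Real.log (φ p.1) ∂m := by
  simp_rw [logRatio_mul_eigenfunction hρ hφ hh heig]
  rw [integral_sub (integrable_const _) ((hφ.log.comp measurable_fst).integrable m),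
    integral_const, probReal_univ, one_smul]

theorem IsHolonomic.entropy_add_integral_log_le [NeZero d] (hτ : ∀ i, Measurable (τ i))
    (hρ : 0 < ρ) (hφ : MemBplus φ) (hh : MemBplus h) (heig : ∀ x, transferOp τ φ h x = ρ * h x)
    {m : Measure (I × (ℕ → Fin d))} [IsProbabilityMeasure m] (hm : IsHolonomic τ m) :
    entropy τ m + ∫ p, Real.log (φ p.1) ∂m ≤ Real.log ρ := by
  have := hm.entropy_le hτ (hφ.mul hh)
  rw [integral_logRatio_mul_eigenfunction hρ hφ hh heig] at this
  linarith

def equilibriumWeight (τ : Fin d → I → I) (φ : I → ℝ) (ρ : ℝ) (h : I → ℝ) (ν : Measure I)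
    (i : Fin d) (x : I) : ℝ :=
  φ (τ i x) * h (τ i x) / (ρ * ∫ y, h y ∂ν)

/-- Under this measure the first coordinate `x` has law `(h / ∫ h dν) ν` and, given `x`, the first
symbol is `i` with probability `φ (τ i x) h (τ i x) / (ρ h x)`; the later symbols play no role and
are taken constant. -/
def equilibriumMeasure (τ : Fin d → I → I) (φ : I → ℝ) (ρ : ℝ) (h : I → ℝ) (ν : Measure I) :
    Measure (I × (ℕ → Fin d)) :=
  sumMapWithDensity ν (equilibriumWeight τ φ ρ h ν) fun i x => (x, fun _ => i)

theorem sum_equilibriumWeight (hρ : ρ ≠ 0) (heig : ∀ x, transferOp τ φ h x = ρ * h x) (x : I) :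
    ∑ i, equilibriumWeight τ φ ρ h ν i x = (∫ y, h y ∂ν)⁻¹ * h x := by
  unfold equilibriumWeight
  rw [← Finset.sum_div]
  change transferOp τ φ h x / _ = _
  rw [heig, mul_div_mul_left _ _ hρ, div_eq_inv_mul]

theorem bddMeasurable_equilibriumWeight (hτ : ∀ i, Measurable (τ i)) (hφ : MemBplus φ)
    (hh : MemBplus h) (i : Fin d) : BddMeasurable (equilibriumWeight τ φ ρ h ν i) :=
  ((hφ.mul hh).bddMeasurable.comp (hτ i)).div_const _

theorem equilibriumWeight_nonneg (hρ : 0 ≤ ρ) (hφ : MemBplus φ) (hh : MemBplus h) (i : Fin d)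
    (x : I) : 0 ≤ equilibriumWeight τ φ ρ h ν i x :=
  div_nonneg ((hφ.mul hh).pos _).le (mul_nonneg hρ (integral_nonneg fun y => (hh.pos y).le))

theorem integral_fst_equilibriumMeasure (hτ : ∀ i, Measurable (τ i)) (hρ : 0 < ρ)
    (hφ : MemBplus φ) (hh : MemBplus h) (heig : ∀ x, transferOp τ φ h x = ρ * h x)
    [IsFiniteMeasure ν] {g : I → ℝ} (hg : BddMeasurable g) :
    ∫ p, g p.1 ∂(equilibriumMeasure τ φ ρ h ν) = (∫ y, h y ∂ν)⁻¹ * ∫ x, h x * g x ∂ν := by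
  have hw := bddMeasurable_equilibriumWeight (ρ := ρ) (ν := ν) hτ hφ hh
  rw [equilibriumMeasure, integral_sumMapWithDensity hw (equilibriumWeight_nonneg hρ.le hφ hh)
      (k := fun i x => (x, fun _ => i)) (fun _ => measurable_prodMk_right) (hg.comp measurable_fst),
    ← integral_finsetSum _ fun i _ => ((hw i).mul hg).integrable ν, ← integral_const_mul]
  refine integral_congr_ae (ae_of_all _ fun x => ?_)
  simp only [← Finset.sum_mul, sum_equilibriumWeight hρ.ne' heig]
  ring

theorem integral_comp_apply_head_equilibriumMeasure (hτ : ∀ i, Measurable (τ i)) (hρ : 0 < ρ)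
    (hφ : MemBplus φ) (hh : MemBplus h) [IsFiniteMeasure ν]
    (hν : ∀ f : C(I, ℝ), ∫ x, transferOp τ φ f x ∂ν = ρ * ∫ x, f x ∂ν)
    {g : I → ℝ} (hg : BddMeasurable g) :
    ∫ p, g (τ (p.2 0) p.1) ∂(equilibriumMeasure τ φ ρ h ν) =
      (∫ y, h y ∂ν)⁻¹ * ∫ x, h x * g x ∂ν := by
  have hw := bddMeasurable_equilibriumWeight (ρ := ρ) (ν := ν) hτ hφ hh
  have hpt (x : I) : ∑ i, equilibriumWeight τ φ ρ h ν i x * g (τ i x) =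
      (ρ * ∫ y, h y ∂ν)⁻¹ * transferOp τ φ (fun y => h y * g y) x := by
    simp only [equilibriumWeight, transferOp, Finset.mul_sum]
    exact Finset.sum_congr rfl fun i _ => by ring
  rw [equilibriumMeasure, integral_sumMapWithDensity hw (equilibriumWeight_nonneg hρ.le hφ hh)
      (k := fun i x => (x, fun _ => i)) (fun _ => measurable_prodMk_right)
      (hg.comp (measurable_apply_head hτ)),
    ← integral_finsetSum _ fun i _ => ((hw i).mul (hg.comp (hτ i))).integrable ν,
    integral_congr_ae (ae_of_all _ hpt), integral_const_mul,
    integral_transferOp_of_bddMeasurable hτ hφ.bddMeasurable (fun x => (hφ.pos x).le) hρ.le hν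
      (hh.bddMeasurable.mul hg), mul_inv_rev, mul_assoc, inv_mul_cancel_left₀ hρ.ne']

theorem isProbabilityMeasure_equilibriumMeasure (hτ : ∀ i, Measurable (τ i)) (hρ : 0 < ρ)
    (hφ : MemBplus φ) (hh : MemBplus h) (heig : ∀ x, transferOp τ φ h x = ρ * h x)
    [IsProbabilityMeasure ν] : IsProbabilityMeasure (equilibriumMeasure τ φ ρ h ν) := by
  have : IsFiniteMeasure (equilibriumMeasure τ φ ρ h ν) :=
    isFiniteMeasure_sumMapWithDensity (bddMeasurable_equilibriumWeight hτ hφ hh)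
  have h1 :=
    integral_fst_equilibriumMeasure (ν := ν) hτ hρ hφ hh heig (BddMeasurable.const (1 : ℝ))
  simp only [mul_one, integral_const, smul_eq_mul,
    inv_mul_cancel₀ (hh.integral_pos ν).ne'] at h1
  exact ⟨ENNReal.toReal_eq_one_iff _ |>.mp h1⟩

theorem isHolonomic_equilibriumMeasure (hτ : ∀ i, Measurable (τ i)) (hρ : 0 < ρ)
    (hφ : MemBplus φ) (hh : MemBplus h) (heig : ∀ x, transferOp τ φ h x = ρ * h x)
    [IsFiniteMeasure ν] (hν : ∀ f : C(I, ℝ), ∫ x, transferOp τ φ f x ∂ν = ρ * ∫ x, f x ∂ν) :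
    IsHolonomic τ (equilibriumMeasure τ φ ρ h ν) := fun f => by
  rw [integral_comp_apply_head_equilibriumMeasure hτ hρ hφ hh hν f.bddMeasurable,
    integral_fst_equilibriumMeasure hτ hρ hφ hh heig f.bddMeasurable]

theorem transferOp_div_add_log_le_logRatio [NeZero d] (hρ : 0 < ρ) (hφ : MemBplus φ)
    (hh : MemBplus h) (heig : ∀ x, transferOp τ φ h x = ρ * h x) {f : I → ℝ} (hf : MemBplus f)
    (x : I) :
    transferOp τ φ (fun y => h y * Real.log (f y / (φ y * h y))) x / (ρ * h x) +
      Real.log (ρ * h x / f x) ≤ logRatio τ f x := by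
  have hρh : 0 < ρ * h x := mul_pos hρ (hh.pos x)
  set p : Fin d → ℝ := fun i => φ (τ i x) * h (τ i x) / (ρ * h x)
  have hp i : 0 < p i := div_pos ((hφ.mul hh).pos _) hρh
  have hp1 : ∑ i, p i = 1 := by
    rw [← Finset.sum_div]
    change transferOp τ φ h x / _ = 1
    rw [heig, div_self hρh.ne']
  have hlog i : Real.log (f (τ i x) / p i) =
      Real.log (f (τ i x) / (φ (τ i x) * h (τ i x))) + Real.log (ρ * h x) := by
    rw [← Real.log_mul (hf.div (hφ.mul hh) |>.pos _).ne' hρh.ne']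
    simp only [p]
    field_simp
  have hsum : ∑ i, p i * Real.log (f (τ i x) / p i) =
      transferOp τ φ (fun y => h y * Real.log (f y / (φ y * h y))) x / (ρ * h x) +
        Real.log (ρ * h x) := by
    simp only [hlog, mul_add, Finset.sum_add_distrib, ← Finset.sum_mul, hp1, one_mul,
      transferOp, Finset.sum_div, p]
    congr 1
    exact Finset.sum_congr rfl fun i _ => by ring
  have hgibbs := sum_mul_log_div_le_log_sum Finset.univ (fun i _ => hp i)
    (fun i _ => hf.pos (τ i x)) hp1
  rw [logRatio, Real.log_div (Finset.sum_pos (fun i _ => hf.pos _) Finset.univ_nonempty).ne'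
    (hf.pos x).ne', Real.log_div hρh.ne' (hf.pos x).ne']
  linarith

theorem le_integral_logRatio_equilibriumMeasure [NeZero d] (hτ : ∀ i, Measurable (τ i))
    (hρ : 0 < ρ) (hφ : MemBplus φ) (hh : MemBplus h) (heig : ∀ x, transferOp τ φ h x = ρ * h x)
    [IsProbabilityMeasure ν] (hν : ∀ f : C(I, ℝ), ∫ x, transferOp τ φ f x ∂ν = ρ * ∫ x, f x ∂ν)
    {f : I → ℝ} (hf : MemBplus f) :
    Real.log ρ - ∫ p, Real.log (φ p.1) ∂(equilibriumMeasure τ φ ρ h ν) ≤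
      ∫ p, logRatio τ f p.1 ∂(equilibriumMeasure τ φ ρ h ν) := by
  have := isProbabilityMeasure_equilibriumMeasure hτ hρ hφ hh heig (ν := ν)
  set μ := equilibriumMeasure τ φ ρ h ν
  set u : I → ℝ := fun y => Real.log (f y / (φ y * h y))
  set v : I → ℝ := fun y => Real.log (ρ * h y / f y)
  set w : I → ℝ := fun y => transferOp τ φ (fun z => h z * u z) y / (ρ * h y)
  have hρh : MemBplus fun y => ρ * h y := (MemBplus.const hρ).mul hh
  have hu : BddMeasurable u := (hf.div (hφ.mul hh)).log
  have hv : BddMeasurable v := (hρh.div hf).log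
  have hw : BddMeasurable w :=
    (hφ.bddMeasurable.transferOp hτ (hh.bddMeasurable.mul hu)).div_memBplus hρh
  have hint {g : I → ℝ} (hg : BddMeasurable g) : Integrable (fun p => g p.1) μ :=
    (hg.comp measurable_fst).integrable μ
  have hwu : ∫ p, w p.1 ∂μ = ∫ p, u p.1 ∂μ := by
    rw [integral_fst_equilibriumMeasure hτ hρ hφ hh heig hw,
      integral_fst_equilibriumMeasure hτ hρ hφ hh heig hu]
    congr 1
    calc ∫ x, h x * w x ∂ν = ∫ x, ρ⁻¹ * transferOp τ φ (fun z => h z * u z) x ∂ν :=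
          integral_congr_ae (ae_of_all _ fun x => by simp only [w]; field_simp [(hh.pos x).ne'])
      _ = ∫ x, h x * u x ∂ν := by
          rw [integral_const_mul, integral_transferOp_of_bddMeasurable hτ hφ.bddMeasurable
            (fun x => (hφ.pos x).le) hρ.le hν (hh.bddMeasurable.mul hu),
            inv_mul_cancel_left₀ hρ.ne']
  have huv (x : I) : logRatio τ (fun y => φ y * h y) x = u x + v x := by
    rw [logRatio_mul_eigenfunction hρ hφ hh heig, ← Real.log_div hρ.ne' (hφ.pos x).ne',
      ← Real.log_mul (hf.div (hφ.mul hh) |>.pos x).ne' (hρh.div hf |>.pos x).ne']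
    congr 1
    field_simp [(hf.pos x).ne', (hh.pos x).ne']
  calc Real.log ρ - ∫ p, Real.log (φ p.1) ∂μ = ∫ p, (u p.1 + v p.1) ∂μ := by
        simp_rw [← integral_logRatio_mul_eigenfunction hρ hφ hh heig μ, huv]
    _ = ∫ p, (w p.1 + v p.1) ∂μ := by
        rw [integral_add (hint hu) (hint hv), integral_add (hint hw) (hint hv), hwu]
    _ ≤ ∫ p, logRatio τ f p.1 ∂μ :=
        integral_mono ((hint hw).add (hint hv)) (hint (hf.bddMeasurable_logRatio hτ))
          fun p => transferOp_div_add_log_le_logRatio hρ hφ hh heig hf p.1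

theorem entropy_equilibriumMeasure [NeZero d] (hτ : ∀ i, Measurable (τ i))
    (hρ : 0 < ρ) (hφ : MemBplus φ) (hh : MemBplus h) (heig : ∀ x, transferOp τ φ h x = ρ * h x)
    [IsProbabilityMeasure ν] (hν : ∀ f : C(I, ℝ), ∫ x, transferOp τ φ f x ∂ν = ρ * ∫ x, f x ∂ν) :
    entropy τ (equilibriumMeasure τ φ ρ h ν) =
      Real.log ρ - ∫ p, Real.log (φ p.1) ∂(equilibriumMeasure τ φ ρ h ν) := by
  have := isProbabilityMeasure_equilibriumMeasure hτ hρ hφ hh heig (ν := ν)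
  refine IsLeast.csInf_eq
    ⟨⟨_, hφ.mul hh, (integral_logRatio_mul_eigenfunction hρ hφ hh heig _).symm⟩, ?_⟩
  rintro _ ⟨f, hf, rfl⟩
  exact le_integral_logRatio_equilibriumMeasure hτ hρ hφ hh heig hν hf

end WeightedSystem

end

theorem stmt10 {d : ℕ} (hd : 1 ≤ d) (τ : Fin d → unitInterval → unitInterval)
    (hτ : ∀ i, Continuous (τ i))
    (φ : unitInterval → ℝ) (hφ : MemBplus φ)
    (ρ : ℝ) (hρ : 0 < ρ) (hw : IsRhoWeighted τ φ ρ) :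
    pressure τ φ = Real.log ρ := by
  obtain ⟨h, hh, heig, ν, hν, hνeig⟩ := hw
  have : NeZero d := NeZero.of_pos hd
  have hτm i : Measurable (τ i) := (hτ i).measurable
  refine IsGreatest.csSup_eq ⟨⟨equilibriumMeasure τ φ ρ h ν,
    isProbabilityMeasure_equilibriumMeasure hτm hρ hφ hh heig,
    isHolonomic_equilibriumMeasure hτm hρ hφ hh heig hνeig, ?_⟩, ?_⟩
  · rw [entropy_equilibriumMeasure hτm hρ hφ hh heig hνeig]
    ring
  · rintro _ ⟨m, hm, hmhol, rfl⟩
    exact hmhol.entropy_add_integral_log_le hτm hρ hφ hh heig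
end
end

section
/- Consider the IFS on $[0,1]$ with $d=2$ maps $\tau_0(x)=x$ and $\tau_1(x)=1-x$, and the potential $\phi(x)=2+\cos(2\pi x)$. Let $\bar{w}\in\Sigma=\{0,1\}^{\mathbb{N}}$ be any sequence different from the constant sequence $(1,1,1,\dots)$, and let $\hat{\nu}_0=\frac{1}{2}\big(\delta_{(0,\,11\bar{w})}+\delta_{(1,\,1\bar{w})}\big)$. Then: (i) $\sup\{\int\ln\phi\,d\hat{\nu}:\hat{\nu}\text{ holonomic}\}=\ln 3$, attained at $\hat{\nu}_0$; (ii) $p(\phi)=\ln 6$; and (iii) $\hat{\nu}_0$ is an equilibrium state for $\phi$, i.e. $h(\hat{\nu}_0)+\int\ln\phi\,d\hat{\nu}_0=p(\phi)=\ln 6$. -/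
open MeasureTheory

noncomputable section

/-- Prepend a symbol to a sequence. -/
def prepend (a : Fin 2) (w : ℕ → Fin 2) : ℕ → Fin 2 :=
  fun n => Nat.casesOn n a w

/-- The IFS `τ₀(x) = x`, `τ₁(x) = 1 - x` on `[0,1]`. -/
def tauEx : Fin 2 → unitInterval → unitInterval :=
  ![fun x => x, unitInterval.symm]

/-- The potential `φ(x) = 2 + cos(2πx)`. -/
def phiEx : unitInterval → ℝ :=
  fun x => 2 + Real.cos (2 * Real.pi * (x : ℝ))

/-- The holonomic probability `ν̂₀ = (δ_{(0,11w̄)} + δ_{(1,1w̄)})/2`. -/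
def nuhatEx (wbar : ℕ → Fin 2) : Measure (unitInterval × (ℕ → Fin 2)) :=
  (2 : ENNReal)⁻¹ •
    (Measure.dirac ((0 : unitInterval), prepend 1 (prepend 1 wbar))
      + Measure.dirac ((1 : unitInterval), prepend 1 wbar))

/-!
The value `ln φ` is at most `ln 3`, with equality at the endpoints `0` and `1`, which
`τ₁` swaps; so `ν̂₀`, which lives on the two endpoints and always applies `τ₁`, is holonomic and
maximizes `∫ ln φ`. Testing the entropy against `f ≡ 1` gives `h(ν̂) ≤ ln 2` for every probability,
while for `ν̂₀` the entropy integrand averages `ln((f 0 + f 1)/f 0)` and `ln((f 0 + f 1)/f 1)`,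
which AM-GM bounds below by `ln 2`. Hence `ν̂₀` attains the bound `ln 2 + ln 3 = ln 6` on the pressure.
-/

section Dirac

variable {α : Type*} [MeasurableSpace α] [MeasurableSingletonClass α]

lemma integral_half_smul_dirac_add_dirac (g : α → ℝ) (a b : α) :
    ∫ p, g p ∂((2 : ENNReal)⁻¹ • (Measure.dirac a + Measure.dirac b)) = (g a + g b) / 2 := by
  rw [integral_smul_measure, integral_add_measure (integrable_dirac enorm_lt_top)
    (integrable_dirac enorm_lt_top), integral_dirac, integral_dirac]
  simp only [ENNReal.toReal_inv, ENNReal.toReal_ofNat, smul_eq_mul]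
  ring

instance isProbabilityMeasure_half_smul_dirac_add_dirac (a b : α) :
    IsProbabilityMeasure ((2 : ENNReal)⁻¹ • (Measure.dirac a + Measure.dirac b)) :=
  ⟨by simp [ENNReal.inv_two_add_inv_two]⟩

end Dirac

lemma entropy_le_log_card {d : ℕ} (τ : Fin d → unitInterval → unitInterval)
    (ν : Measure (unitInterval × (ℕ → Fin d))) [IsProbabilityMeasure ν] :
    entropy τ ν ≤ Real.log d := by
  have hone : Real.log d ∈ {r : ℝ | ∃ f : unitInterval → ℝ, MemBplus f ∧
      r = ∫ p, Real.log ((∑ i : Fin d, f (τ i p.1)) / f p.1) ∂ν} :=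
    ⟨fun _ => 1, ⟨measurable_const, 1, 1, one_pos, fun _ => le_rfl, fun _ => le_rfl⟩, by simp⟩
  by_cases hbdd : BddBelow {r : ℝ | ∃ f : unitInterval → ℝ, MemBplus f ∧
      r = ∫ p, Real.log ((∑ i : Fin d, f (τ i p.1)) / f p.1) ∂ν}
  · exact csInf_le hbdd hone
  · rw [entropy, Real.sInf_of_not_bddBelow hbdd]
    exact Real.log_natCast_nonneg d

lemma two_mul_log_two_le_log_add_div_add_log_add_div {a b : ℝ} (ha : 0 < a) (hb : 0 < b) :
    2 * Real.log 2 ≤ Real.log ((a + b) / a) + Real.log ((a + b) / b) := by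
  rw [← Real.log_mul (by positivity) (by positivity), ← Real.log_rpow two_pos]
  refine Real.log_le_log (by positivity) ?_
  rw [div_mul_div_comm, le_div_iff₀ (by positivity), Real.rpow_two]
  nlinarith [sq_nonneg (a - b)]

@[simp] lemma tauEx_zero (x : unitInterval) : tauEx 0 x = x := rfl

@[simp] lemma tauEx_one (x : unitInterval) : tauEx 1 x = unitInterval.symm x := rfl

lemma one_le_phiEx (x : unitInterval) : 1 ≤ phiEx x := by
  have := Real.neg_one_le_cos (2 * Real.pi * x)
  simp only [phiEx]
  linarith

lemma phiEx_le_three (x : unitInterval) : phiEx x ≤ 3 := by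
  have := Real.cos_le_one (2 * Real.pi * x)
  simp only [phiEx]
  linarith

lemma continuous_log_phiEx : Continuous fun x => Real.log (phiEx x) :=
  (continuous_const.add (Real.continuous_cos.comp (continuous_const.mul continuous_subtype_val))).log
    fun x => (zero_lt_one.trans_le (one_le_phiEx x)).ne'

lemma integral_log_phiEx_le (ν : Measure (unitInterval × (ℕ → Fin 2)))
    [IsProbabilityMeasure ν] : ∫ p, Real.log (phiEx p.1) ∂ν ≤ Real.log 3 := by
  have hint : Integrable (fun p : unitInterval × (ℕ → Fin 2) => Real.log (phiEx p.1)) ν :=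
    (continuous_log_phiEx.comp continuous_fst).integrable_of_hasCompactSupport
      (HasCompactSupport.of_compactSpace _)
  calc ∫ p, Real.log (phiEx p.1) ∂ν ≤ ∫ _, Real.log 3 ∂ν :=
        integral_mono hint (integrable_const _) fun p =>
          Real.log_le_log (zero_lt_one.trans_le (one_le_phiEx p.1)) (phiEx_le_three p.1)
    _ = Real.log 3 := by simp

section Example

variable (wbar : ℕ → Fin 2)

lemma integral_nuhatEx (g : unitInterval × (ℕ → Fin 2) → ℝ) :
    ∫ p, g p ∂(nuhatEx wbar) = (g (0, prepend 1 (prepend 1 wbar)) + g (1, prepend 1 wbar)) / 2 :=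
  integral_half_smul_dirac_add_dirac g _ _

instance : IsProbabilityMeasure (nuhatEx wbar) :=
  isProbabilityMeasure_half_smul_dirac_add_dirac _ _

lemma isHolonomic_nuhatEx : IsHolonomic tauEx (nuhatEx wbar) := by
  intro f
  simp only [integral_nuhatEx]
  simp [prepend, add_comm]

lemma integral_log_phiEx_nuhatEx : ∫ p, Real.log (phiEx p.1) ∂(nuhatEx wbar) = Real.log 3 := by
  simp only [integral_nuhatEx, phiEx]
  norm_num

lemma entropy_nuhatEx : entropy tauEx (nuhatEx wbar) = Real.log 2 := by
  refine le_antisymm (by simpa using entropy_le_log_card tauEx (nuhatEx wbar)) ?_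
  refine le_csInf ⟨_, fun _ => 1,
    ⟨measurable_const, 1, 1, one_pos, fun _ => le_rfl, fun _ => le_rfl⟩, rfl⟩ ?_
  rintro _ ⟨f, ⟨-, c, C, hc, hcf, -⟩, rfl⟩
  simp only [integral_nuhatEx, Fin.sum_univ_two, tauEx_zero, tauEx_one, unitInterval.symm_zero,
    unitInterval.symm_one, add_comm (f 1)]
  linarith [two_mul_log_two_le_log_add_div_add_log_add_div (hc.trans_le (hcf 0))
    (hc.trans_le (hcf 1))]

end Example

theorem stmt16_general (wbar : ℕ → Fin 2) :
    (sSup {r : ℝ | ∃ nuhat : Measure (unitInterval × (ℕ → Fin 2)),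
        IsProbabilityMeasure nuhat ∧ IsHolonomic tauEx nuhat ∧
        r = ∫ p, Real.log (phiEx p.1) ∂nuhat}
      = Real.log 3
      ∧ (∫ p, Real.log (phiEx p.1) ∂(nuhatEx wbar)) = Real.log 3) ∧
    pressure tauEx phiEx = Real.log 6 ∧
    entropy tauEx (nuhatEx wbar) + (∫ p, Real.log (phiEx p.1) ∂(nuhatEx wbar))
      = Real.log 6 := by
  have hlog6 : Real.log 2 + Real.log 3 = Real.log 6 := by
    rw [← Real.log_mul two_ne_zero three_ne_zero]
    norm_num
  have hequilibrium : entropy tauEx (nuhatEx wbar) + ∫ p, Real.log (phiEx p.1) ∂(nuhatEx wbar)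
      = Real.log 6 := by
    rw [entropy_nuhatEx, integral_log_phiEx_nuhatEx, hlog6]
  refine ⟨⟨IsGreatest.csSup_eq ⟨⟨nuhatEx wbar, inferInstance, isHolonomic_nuhatEx wbar,
      (integral_log_phiEx_nuhatEx wbar).symm⟩, ?_⟩, integral_log_phiEx_nuhatEx wbar⟩,
    IsGreatest.csSup_eq ⟨⟨nuhatEx wbar, inferInstance, isHolonomic_nuhatEx wbar,
      hequilibrium.symm⟩, ?_⟩, hequilibrium⟩
  · rintro _ ⟨ν, hν, -, rfl⟩
    exact integral_log_phiEx_le ν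
  · rintro _ ⟨ν, hν, -, rfl⟩
    have hentropy : entropy tauEx ν ≤ Real.log 2 := by
      simpa using entropy_le_log_card tauEx ν
    linarith [integral_log_phiEx_le ν]

theorem stmt16 (wbar : ℕ → Fin 2) (hwbar : wbar ≠ fun _ => 1) :
    (sSup {r : ℝ | ∃ nuhat : Measure (unitInterval × (ℕ → Fin 2)),
        IsProbabilityMeasure nuhat ∧ IsHolonomic tauEx nuhat ∧
        r = ∫ p, Real.log (phiEx p.1) ∂nuhat}
      = Real.log 3
      ∧ (∫ p, Real.log (phiEx p.1) ∂(nuhatEx wbar)) = Real.log 3) ∧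
    pressure tauEx phiEx = Real.log 6 ∧
    entropy tauEx (nuhatEx wbar) + (∫ p, Real.log (phiEx p.1) ∂(nuhatEx wbar))
      = Real.log 6 :=
  stmt16_general wbar
end
end
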